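/- The assignments \(C \mapsto h_C\) (the height function determined by path increments from the origin) and \(h \mapsto C_h = \{(x \to x+\alpha_i) \mid h(x+\alpha_i) = h(x) - n\}\) define mutually inverse bijections between the set of cuts of \(\hat{Q}\) and the set of height functions on \(L_0\). -/

import Mathlib

open scoped Classical

noncomputable section

/-- Vertices of the universal cover quiver: the lattice `L₀ = ℤⁿ`. -/
abbrev V (n : ℕ) := Fin n → ℤ

/-- The vectors `α₁, …, αₙ` (standard basis) and `α_{n+1} = -∑ αᵢ`. -/
def alphav (n : ℕ) (i : Fin (n + 1)) : V n :=
  if h : (i : ℕ) < n then Pi.single ⟨i, h⟩ 1 else fun _ => -1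

/-- An arrow of `Q̂` is a pair (source, type): the arrow `x → x + αᵢ`. -/
abbrev Arrow (n : ℕ) := V n × Fin (n + 1)

/-- The list of arrows of the path starting at `x` with list of types `l`. -/
def pathArrows (n : ℕ) : V n → List (Fin (n + 1)) → List (Arrow n)
  | _, [] => []
  | x, i :: l => (x, i) :: pathArrows n (x + alphav n i) l

/-- An elementary cycle: length `n+1`, pairwise distinct types, closed. -/
def IsElemCycle (n : ℕ) (l : List (Fin (n + 1))) : Prop :=
  l.length = n + 1 ∧ l.Nodup ∧ (l.map (alphav n)).sum = 0

/-- A cut: every elementary cycle passes through exactly one arrow of `C`. -/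
def IsCut (n : ℕ) (C : Set (Arrow n)) : Prop :=
  ∀ (x : V n) (l : List (Fin (n + 1))), IsElemCycle n l →
    ∃! a : Arrow n, a ∈ pathArrows n x l ∧ a ∈ C

/-- Height increment of a single arrow. -/
def hInc (n : ℕ) (C : Set (Arrow n)) (a : Arrow n) : ℤ :=
  if a ∈ C then -(n : ℤ) else 1

/-- Height increment along the path from `x` with types `l`. -/
def pathH (n : ℕ) (C : Set (Arrow n)) (x : V n) (l : List (Fin (n + 1))) : ℤ :=
  ((pathArrows n x l).map (hInc n C)).sum

/-- A height function. -/
def IsHeight (n : ℕ) (h : V n → ℤ) : Prop :=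
  h 0 = 0 ∧ ∀ (x : V n) (i : Fin (n + 1)),
    h (x + alphav n i) = h x + 1 ∨ h (x + alphav n i) = h x - n

/-- The cut associated to a height function. -/
def cutOf (n : ℕ) (h : V n → ℤ) : Set (Arrow n) :=
  {a | h (a.1 + alphav n a.2) = h a.1 - n}

/-- `L₁`-periodicity of a set of arrows. -/
def IsPeriodic (n : ℕ) (L1 : AddSubgroup (V n)) (C : Set (Arrow n)) : Prop :=
  ∀ a : Arrow n, ∀ y ∈ L1, (a ∈ C ↔ (a.1 + y, a.2) ∈ C)

/-- The type of a periodic cut: the number of `L₁`-orbits of cut arrows of type `i`. -/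
def typeCount (n : ℕ) (L1 : AddSubgroup (V n)) (C : Set (Arrow n)) (i : Fin (n + 1)) : ℕ :=
  Nat.card ((QuotientAddGroup.mk (s := L1)) '' {x : V n | (x, i) ∈ C})

end

section Aux

open scoped Classical

variable {n : ℕ}

lemma alphav_lt (i : Fin (n+1)) (h : (i:ℕ) < n) : alphav n i = Pi.single ⟨i, h⟩ 1 := by
  simp [alphav, h]

lemma alphav_castSucc (j : Fin n) : alphav n j.castSucc = Pi.single j 1 := by
  rw [alphav_lt j.castSucc (by simp [j.isLt])]
  congr 1

lemma alphav_last : alphav n (Fin.last n) = fun _ => (-1 : ℤ) := by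
  simp [alphav]

lemma pathArrows_snd (x : V n) (l : List (Fin (n+1))) :
    (pathArrows n x l).map Prod.snd = l := by
  induction l generalizing x with
  | nil => rfl
  | cons i l ih => simp [pathArrows, ih]

lemma pathArrows_length (x : V n) (l : List (Fin (n+1))) :
    (pathArrows n x l).length = l.length := by
  induction l generalizing x with
  | nil => rfl
  | cons i l ih => simp [pathArrows, ih]

lemma pathArrows_append (x : V n) (l l' : List (Fin (n+1))) :
    pathArrows n x (l ++ l') =
      pathArrows n x l ++ pathArrows n (x + (l.map (alphav n)).sum) l' := by
  induction l generalizing x with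
  | nil => simp [pathArrows]
  | cons i l ih => simp [pathArrows, ih, add_assoc]

lemma pathH_nil (C : Set (Arrow n)) (x : V n) : pathH n C x [] = 0 := rfl

lemma pathH_cons (C : Set (Arrow n)) (x : V n) (i : Fin (n+1)) (l : List (Fin (n+1))) :
    pathH n C x (i :: l) = hInc n C (x, i) + pathH n C (x + alphav n i) l := by
  simp [pathH, pathArrows]

lemma pathH_append (C : Set (Arrow n)) (x : V n) (l l' : List (Fin (n+1))) :
    pathH n C x (l ++ l') = pathH n C x l + pathH n C (x + (l.map (alphav n)).sum) l' := by
  simp [pathH, pathArrows_append]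

lemma sum_alphav (n : ℕ) : ∑ i : Fin (n+1), alphav n i = 0 := by
  rw [Fin.sum_univ_castSucc]
  have h1 : ∀ i : Fin n, alphav n i.castSucc = Pi.single i (1:ℤ) := alphav_castSucc
  funext j
  simp [Finset.sum_apply, h1, alphav_last, Pi.single_apply]

lemma sum_map_alphav_finRange (n : ℕ) :
    ((List.finRange (n+1)).map (alphav n)).sum = 0 := by
  rw [← Fin.sum_univ_def, sum_alphav]

lemma isElemCycle_of_nodup_length {l : List (Fin (n+1))} (h1 : l.Nodup)
    (h2 : l.length = n + 1) : IsElemCycle n l := by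
  refine ⟨h2, h1, ?_⟩
  have huniv : l.toFinset = Finset.univ := by
    apply Finset.eq_univ_of_card
    rw [List.toFinset_card_of_nodup h1, h2, Fintype.card_fin]
  have hperm : l.Perm (List.finRange (n+1)) :=
    List.perm_of_nodup_nodup_toFinset_eq h1 (List.nodup_finRange _)
      (by rw [huniv, List.toFinset_finRange])
  rw [(hperm.map (alphav n)).sum_eq, sum_map_alphav_finRange]

lemma sum_hInc (C : Set (Arrow n)) (L : List (Arrow n)) :
    (L.map (hInc n C)).sum =
      (L.length : ℤ) - ((n : ℤ) + 1) * ((L.filter (fun a => decide (a ∈ C))).length : ℤ) := by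
  induction L with
  | nil => simp
  | cons a L ih =>
    by_cases ha : a ∈ C
    · simp only [List.map_cons, List.sum_cons, List.filter_cons, ha, decide_true,
        if_true, List.length_cons, ih, hInc, if_pos ha]
      push_cast; ring
    · simp only [List.map_cons, List.sum_cons, List.filter_cons, ha, decide_false,
        if_false, List.length_cons, ih, hInc, if_neg ha]
      push_cast; ring
lemma hInc_cutOf {h : V n → ℤ} (hh : IsHeight n h) (x : V n) (i : Fin (n+1)) :
    hInc n (cutOf n h) (x, i) = h (x + alphav n i) - h x := by
  rcases hh.2 x i with h1 | h1
  · rw [hInc, if_neg, h1]; · ring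
    · intro hc
      have : h (x + alphav n i) = h x - n := hc
      omega
  · rw [hInc, if_pos, h1]; · ring
    · exact h1

lemma pathH_cutOf {h : V n → ℤ} (hh : IsHeight n h) (x : V n) (l : List (Fin (n+1))) :
    pathH n (cutOf n h) x l = h (x + (l.map (alphav n)).sum) - h x := by
  induction l generalizing x with
  | nil => simp [pathH_nil]
  | cons i l ih =>
    rw [pathH_cons, ih, hInc_cutOf hh]
    rw [List.map_cons, List.sum_cons, ← add_assoc]
    ring

lemma filter_mem_eq_singleton {C : Set (Arrow n)} {L : List (Arrow n)} {a : Arrow n}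
    (hnd : L.Nodup) (haL : a ∈ L) (haC : a ∈ C)
    (hu : ∀ b : Arrow n, b ∈ L ∧ b ∈ C → b = a) :
    L.filter (fun b => decide (b ∈ C)) = [a] := by
  set F := L.filter (fun b => decide (b ∈ C)) with hF
  have hfa : ∀ b ∈ F, b = a := by
    intro b hb
    rw [hF, List.mem_filter] at hb
    exact hu b ⟨hb.1, by simpa using hb.2⟩
  have haf : a ∈ F := List.mem_filter.mpr ⟨haL, by simpa using haC⟩
  have hrep : F = List.replicate F.length a := List.eq_replicate_length.mpr hfa
  have hnd' : F.Nodup := hnd.filter _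
  rw [hrep] at hnd' haf
  have hle : F.length ≤ 1 := List.nodup_replicate.mp hnd'
  have hne : F.length ≠ 0 := by
    intro h0; rw [h0] at haf; simp at haf
  have : F.length = 1 := by omega
  rw [hrep, this]; rfl

lemma cut_cycle_zero {C : Set (Arrow n)} (hC : IsCut n C) {l : List (Fin (n+1))}
    (hl : IsElemCycle n l) (x : V n) : pathH n C x l = 0 := by
  obtain ⟨a, ⟨haL, haC⟩, hu⟩ := hC x l hl
  have hnd : (pathArrows n x l).Nodup := by
    have h2 := hl.2.1
    rw [← pathArrows_snd x l] at h2
    exact h2.of_map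
  have hfil := filter_mem_eq_singleton hnd haL haC hu
  have := sum_hInc C (pathArrows n x l)
  rw [hfil, pathArrows_length, hl.1] at this
  rw [pathH, this]
  simp
lemma square {C : Set (Arrow n)} (hC : IsCut n C) {i j : Fin (n+1)} (hij : i ≠ j) (x : V n) :
    hInc n C (x, i) + hInc n C (x + alphav n i, j)
      = hInc n C (x, j) + hInc n C (x + alphav n j, i) := by
  set r := (List.finRange (n+1)).filter (fun k => decide (k ≠ i ∧ k ≠ j)) with hr
  have hrmem : ∀ k : Fin (n+1), k ∈ r ↔ (k ≠ i ∧ k ≠ j) := by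
    intro k; rw [hr, List.mem_filter]; simp [List.mem_finRange]
  have hrnd : r.Nodup := (List.nodup_finRange _).filter _
  have hnd1 : (i :: j :: r).Nodup := by
    refine List.nodup_cons.mpr ⟨?_, List.nodup_cons.mpr ⟨?_, hrnd⟩⟩
    · simp only [List.mem_cons]
      rintro (h | h)
      · exact hij h
      · exact ((hrmem i).mp h).1 rfl
    · intro h; exact ((hrmem j).mp h).2 rfl
  have hnd2 : (j :: i :: r).Nodup := by
    refine List.nodup_cons.mpr ⟨?_, List.nodup_cons.mpr ⟨?_, hrnd⟩⟩
    · simp only [List.mem_cons]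
      rintro (h | h)
      · exact hij h.symm
      · exact ((hrmem j).mp h).2 rfl
    · intro h; exact ((hrmem i).mp h).1 rfl
  have hmem : ∀ k : Fin (n+1), k ∈ (i :: j :: r) := by
    intro k
    by_cases hki : k = i
    · simp [hki]
    · by_cases hkj : k = j
      · simp [hkj]
      · simp [List.mem_cons, (hrmem k).mpr ⟨hki, hkj⟩]
  have hlen1 : (i :: j :: r).length = n + 1 := by
    have huniv : (i :: j :: r).toFinset = Finset.univ :=
      Finset.eq_univ_of_forall (fun k => List.mem_toFinset.mpr (hmem k))
    have := List.toFinset_card_of_nodup hnd1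
    rw [huniv, Finset.card_univ, Fintype.card_fin] at this
    omega
  have hlen2 : (j :: i :: r).length = n + 1 := by
    simpa using hlen1
  have hc1 := cut_cycle_zero hC (isElemCycle_of_nodup_length hnd1 hlen1) x
  have hc2 := cut_cycle_zero hC (isElemCycle_of_nodup_length hnd2 hlen2) x
  rw [pathH_cons, pathH_cons] at hc1 hc2
  rw [add_right_comm x (alphav n j) (alphav n i)] at hc2
  linarith

lemma pathH_perm {C : Set (Arrow n)} (hC : IsCut n C) {l l' : List (Fin (n+1))}
    (hp : l.Perm l') : ∀ x : V n, pathH n C x l = pathH n C x l' := by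
  induction hp with
  | nil => intro x; rfl
  | cons i _ ih => intro x; rw [pathH_cons, pathH_cons, ih]
  | swap i j l =>
    intro x
    rcases eq_or_ne i j with rfl | hij
    · rfl
    · rw [pathH_cons, pathH_cons, pathH_cons, pathH_cons,
        add_right_comm x (alphav n j) (alphav n i)]
      have := square hC hij.symm x
      linarith
  | trans _ _ ih1 ih2 => intro x; rw [ih1, ih2]
lemma count_join_replicate {α : Type*} [DecidableEq α] (m : ℕ) (σ : List α) (a : α) :
    ((List.replicate m σ).flatten).count a = m * σ.count a := by
  induction m with
  | zero => simp
  | succ m ih => simp [List.replicate_succ, List.count_append, ih]; ring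

lemma count_finRange (i : Fin (n+1)) : (List.finRange (n+1)).count i = 1 :=
  List.count_eq_one_of_mem (List.nodup_finRange _) (List.mem_finRange i)

lemma pathH_repeat {C : Set (Arrow n)} (hC : IsCut n C) (x : V n) (m : ℕ) :
    pathH n C x ((List.replicate m (List.finRange (n+1))).flatten) = 0 := by
  induction m generalizing x with
  | zero => rfl
  | succ m ih =>
    rw [List.replicate_succ, List.flatten_cons, pathH_append, sum_map_alphav_finRange,
      add_zero, ih, cut_cycle_zero hC (isElemCycle_of_nodup_length (List.nodup_finRange _)
        List.length_finRange) x]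
    ring

lemma sum_map_alphav_apply (l : List (Fin (n+1))) (j : Fin n) :
    ((l.map (alphav n)).sum) j = (l.count j.castSucc : ℤ) - (l.count (Fin.last n) : ℤ) := by
  induction l with
  | nil => simp
  | cons i l ih =>
    rw [List.map_cons, List.sum_cons]
    have hadd : (alphav n i + (l.map (alphav n)).sum) j
        = alphav n i j + ((l.map (alphav n)).sum) j := rfl
    have hkey : alphav n i j =
        (if i = j.castSucc then (1:ℤ) else 0) - (if i = Fin.last n then 1 else 0) := by
      by_cases h : (i : ℕ) < n
      · have hlast : ¬ (i = Fin.last n) := by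
          intro he; rw [Fin.ext_iff] at he; simp [Fin.last] at he; omega
        rw [alphav_lt i h, if_neg hlast, sub_zero, Pi.single_apply]
        have heq : (j = (⟨(i:ℕ), h⟩ : Fin n)) ↔ (i = j.castSucc) := by
          rw [Fin.ext_iff, Fin.ext_iff]
          simp [eq_comm]
        by_cases hc : i = j.castSucc
        · rw [if_pos (heq.mpr hc), if_pos hc]
        · rw [if_neg (fun he => hc (heq.mp he)), if_neg hc]
      · have hin : (i : ℕ) = n := by have := i.isLt; omega
        have hlast : i = Fin.last n := by rw [Fin.ext_iff]; simp [Fin.last, hin]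
        subst hlast
        have hcs : ¬ (Fin.last n = j.castSucc) := by
          intro he; rw [Fin.ext_iff] at he; simp [Fin.last] at he; omega
        rw [if_neg hcs, if_pos rfl]
        simp [alphav]
    rw [hadd, ih, hkey]
    simp only [List.count_cons, beq_iff_eq]
    push_cast
    split_ifs <;> ring

lemma pathH_eq_of_count_add {C : Set (Arrow n)} (hC : IsCut n C) {l l' : List (Fin (n+1))}
    {m : ℕ} (hcnt : ∀ i : Fin (n+1), l'.count i = l.count i + m) (x : V n) :
    pathH n C x l' = pathH n C x l := by
  have hperm : l'.Perm (l ++ (List.replicate m (List.finRange (n+1))).flatten) := by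
    rw [List.perm_iff_count]
    intro i
    rw [List.count_append, count_join_replicate, count_finRange, hcnt i]
    ring
  rw [pathH_perm hC hperm x, pathH_append, pathH_repeat hC, add_zero]

lemma pathH_eq_of_sum_eq {C : Set (Arrow n)} (hC : IsCut n C) {l l' : List (Fin (n+1))}
    (hs : (l.map (alphav n)).sum = (l'.map (alphav n)).sum) (x : V n) :
    pathH n C x l = pathH n C x l' := by
  have hco : ∀ i : Fin (n+1), (l'.count i : ℤ) - l.count i
      = (l'.count (Fin.last n) : ℤ) - l.count (Fin.last n) := by
    intro i
    by_cases h : (i : ℕ) < n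
    · have hi : i = (⟨(i : ℕ), h⟩ : Fin n).castSucc := by
        rw [Fin.ext_iff]; simp
      have h1 := sum_map_alphav_apply l ⟨(i : ℕ), h⟩
      have h2 := sum_map_alphav_apply l' ⟨(i : ℕ), h⟩
      rw [hs] at h1
      rw [hi]
      omega
    · have hin : (i : ℕ) = n := by have := i.isLt; omega
      have : i = Fin.last n := by rw [Fin.ext_iff]; simp [Fin.last, hin]
      rw [this]
  rcases le_or_gt (l.count (Fin.last n)) (l'.count (Fin.last n)) with hle | hlt
  · set m : ℕ := l'.count (Fin.last n) - l.count (Fin.last n) with hm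
    have hcnt : ∀ i : Fin (n+1), l'.count i = l.count i + m := by
      intro i; have := hco i; omega
    exact (pathH_eq_of_count_add hC hcnt x).symm
  · set m : ℕ := l.count (Fin.last n) - l'.count (Fin.last n) with hm
    have hcnt : ∀ i : Fin (n+1), l.count i = l'.count i + m := by
      intro i; have := hco i; omega
    exact pathH_eq_of_count_add hC hcnt x
def pathSet (n : ℕ) : AddSubmonoid (V n) where
  carrier := {x | ∃ l : List (Fin (n+1)), (l.map (alphav n)).sum = x}
  zero_mem' := ⟨[], rfl⟩
  add_mem' := by
    rintro a b ⟨l, rfl⟩ ⟨l', rfl⟩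
    exact ⟨l ++ l', by simp⟩

lemma single_mem (j : Fin n) : Pi.single j (1:ℤ) ∈ pathSet n :=
  ⟨[j.castSucc], by simp [alphav_castSucc]⟩

lemma neg_single_mem (j : Fin n) : -Pi.single j (1:ℤ) ∈ pathSet n := by
  refine ⟨(List.finRange (n+1)).erase j.castSucc, ?_⟩
  have hperm : (List.finRange (n+1)).Perm
      (j.castSucc :: (List.finRange (n+1)).erase j.castSucc) :=
    List.perm_cons_erase (List.mem_finRange _)
  have := (hperm.map (alphav n)).sum_eq
  rw [sum_map_alphav_finRange, List.map_cons, List.sum_cons, alphav_castSucc] at this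
  rw [eq_comm, add_comm] at this
  exact eq_neg_of_add_eq_zero_left this

lemma zsmul_single_mem (c : ℤ) (j : Fin n) : c • Pi.single j (1:ℤ) ∈ pathSet n := by
  have hc : ((c.toNat : ℤ) - ((-c).toNat : ℤ)) = c := by omega
  have key : ∀ v : V n, c • v = c.toNat • v + (-c).toNat • (-v) := by
    intro v
    rw [smul_neg, ← natCast_zsmul, ← natCast_zsmul, ← sub_eq_add_neg, ← sub_smul, hc]
  rw [key]
  exact AddSubmonoid.add_mem _ (AddSubmonoid.nsmul_mem _ (single_mem j) _)
    (AddSubmonoid.nsmul_mem _ (neg_single_mem j) _)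

lemma exists_path (x : V n) : ∃ l : List (Fin (n+1)), (l.map (alphav n)).sum = x := by
  have : x ∈ pathSet n := by
    have hx : x = ∑ j : Fin n, (x j) • Pi.single j (1:ℤ) := by
      funext k
      simp [Finset.sum_apply, Pi.single_apply]
    rw [hx]
    exact AddSubmonoid.sum_mem _ (fun j _ => zsmul_single_mem (x j) j)
  exact this

end Aux

/-- `C ↦ h_C` and `h ↦ C_h` are mutually inverse bijections between
cuts and height functions. -/
theorem stmt_5 (n : ℕ) (hn : 1 ≤ n) :
    (∀ h : V n → ℤ, IsHeight n h → IsCut n (cutOf n h)) ∧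
    (∀ C : Set (Arrow n), IsCut n C →
      ∃! h : V n → ℤ, IsHeight n h ∧ cutOf n h = C ∧
        ∀ (x : V n) (l : List (Fin (n + 1))),
          (l.map (alphav n)).sum = x → h x = pathH n C 0 l) := by
  constructor
  · -- Part 1
    intro h hh x l hl
    have hz : ((pathArrows n x l).map (hInc n (cutOf n h))).sum = 0 := by
      have : pathH n (cutOf n h) x l = 0 := by
        rw [pathH_cutOf hh, hl.2.2, add_zero, sub_self]
      exact this
    have hsum := sum_hInc (cutOf n h) (pathArrows n x l)
    rw [pathArrows_length, hl.1, hz] at hsum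
    set k := ((pathArrows n x l).filter
      (fun a => decide (a ∈ cutOf n h))).length with hkdef
    have hk1 : (k : ℤ) = 1 := by
      have hne : ((n : ℤ) + 1) ≠ 0 := by positivity
      have hmul : ((n : ℤ) + 1) * (k : ℤ) = ((n : ℤ) + 1) * 1 := by
        push_cast at hsum; linarith
      exact mul_left_cancel₀ hne hmul
    have hk : k = 1 := by exact_mod_cast hk1
    obtain ⟨a, hfa⟩ := List.length_eq_one_iff.mp hk
    have hmema : a ∈ (pathArrows n x l).filter (fun a => decide (a ∈ cutOf n h)) := by
      rw [hfa]; exact List.mem_singleton_self a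
    rw [List.mem_filter] at hmema
    refine ⟨a, ⟨hmema.1, of_decide_eq_true hmema.2⟩, ?_⟩
    intro b ⟨hbL, hbC⟩
    have : b ∈ (pathArrows n x l).filter (fun a => decide (a ∈ cutOf n h)) :=
      List.mem_filter.mpr ⟨hbL, decide_eq_true hbC⟩
    rw [hfa] at this
    simpa using this
  · -- Part 2
    intro C hC
    choose p hp using fun x : V n => exists_path x
    have cond3 : ∀ (x : V n) (l : List (Fin (n + 1))),
        (l.map (alphav n)).sum = x → pathH n C 0 (p x) = pathH n C 0 l := by
      intro x l hl
      exact pathH_eq_of_sum_eq hC (by rw [hp x, hl]) 0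
    have hstep : ∀ (x : V n) (i : Fin (n + 1)),
        pathH n C 0 (p (x + alphav n i)) = pathH n C 0 (p x) + hInc n C (x, i) := by
      intro x i
      have h1 : ((p x ++ [i]).map (alphav n)).sum = x + alphav n i := by
        rw [List.map_append, List.sum_append, hp x]; simp
      rw [cond3 _ _ h1, pathH_append, hp x, zero_add, pathH_cons, pathH_nil, add_zero]
    have hnn : (0 : ℤ) ≤ (n : ℤ) := Int.natCast_nonneg n
    refine ⟨fun x => pathH n C 0 (p x), ⟨⟨?_, ?_⟩, ?_, ?_⟩, ?_⟩
    · show pathH n C 0 (p 0) = 0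
      have := cond3 0 [] (by simp)
      simpa [pathH_nil] using this
    · intro x i
      show pathH n C 0 (p (x + alphav n i)) = pathH n C 0 (p x) + 1 ∨
        pathH n C 0 (p (x + alphav n i)) = pathH n C 0 (p x) - (n : ℤ)
      rw [hstep x i]
      by_cases hxi : (x, i) ∈ C
      · right; rw [hInc, if_pos hxi]; ring
      · left; rw [hInc, if_neg hxi]
    · ext a
      obtain ⟨x, i⟩ := a
      simp only [cutOf, Set.mem_setOf_eq]
      show pathH n C 0 (p (x + alphav n i)) = pathH n C 0 (p x) - (n : ℤ) ↔ (x, i) ∈ C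
      rw [hstep x i]
      constructor
      · intro hcase
        by_contra hxi
        rw [hInc, if_neg hxi] at hcase
        linarith
      · intro hxi
        rw [hInc, if_pos hxi]; ring
    · intro x l hl
      show pathH n C 0 (p x) = pathH n C 0 l
      exact cond3 x l hl
    · intro h' ⟨_, _, hcond3'⟩
      funext x
      exact hcond3' x (p x) (hp x)
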